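/- arXiv:2411.12700 — 3 statements merged into one kernel-verified Lean document; each statement's English description precedes it below -/
import Mathlib

section
/- If a vector x ∈ R^d satisfies ||x||_1 ≤ τ, then for any positive integer s, the l2-error of the best s-sparse approximation to x is at most τ/(2√s); that is, there exists an s-sparse vector y with ||x - y||_2 ≤ τ/(2√s). -/
/-!
Let `T` be a set of `s` coordinates of largest magnitude, with head mass `A = ∑_{i ∈ T} |xᵢ|` and
tail mass `B = ∑_{i ∉ T} |xᵢ|`. Every tail coordinate is at most the smallest head coordinate, hence
at most `A / s`, so truncating `x` to `T` leaves an error `∑_{i ∉ T} xᵢ² ≤ (A / s) B`, and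
`4AB ≤ (A + B)² ≤ τ²` by AM-GM.
-/

open Finset

section TopCoordinates

variable {ι α : Type*} [Fintype ι] [DecidableEq ι]
  [AddCommGroup α] [LinearOrder α] [IsOrderedAddMonoid α]

lemma exists_card_eq_forall_notMem_le (a : ι → α) {k : ℕ} (hk : k ≤ Fintype.card ι) :
    ∃ T : Finset ι, #T = k ∧ ∀ i ∉ T, ∀ j ∈ T, a i ≤ a j := by
  -- A `k`-set of maximal mass: exchanging `j ∈ T` for `i ∉ T` cannot increase its mass.
  obtain ⟨T, hT, hmax⟩ := exists_max_image (powersetCard k univ) (fun T => ∑ j ∈ T, a j)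
    (powersetCard_nonempty.mpr (by simpa using hk))
  rw [mem_powersetCard] at hT
  refine ⟨T, hT.2, fun i hi j hj => ?_⟩
  have hi' : i ∉ T.erase j := fun h => hi (mem_of_mem_erase h)
  have hswap := hmax (insert i (T.erase j)) <| mem_powersetCard.mpr
    ⟨subset_univ _, by
      rw [card_insert_of_notMem hi', card_erase_of_mem hj,
        Nat.sub_add_cancel (card_pos.mpr ⟨j, hj⟩), hT.2]⟩
  rw [sum_insert hi', ← add_sum_erase T a hj] at hswap
  exact le_of_add_le_add_right hswap

lemma exists_card_le_forall_notMem_nsmul_le (a : ι → α) (s : ℕ) :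
    ∃ T : Finset ι, #T ≤ s ∧ ∀ i ∉ T, s • a i ≤ ∑ j ∈ T, a j := by
  obtain ⟨T, hcard, hle⟩ := exists_card_eq_forall_notMem_le a (min_le_right s _)
  refine ⟨T, hcard ▸ min_le_left _ _, fun i hi => ?_⟩
  have hs : #T = s := by
    have : #T < Fintype.card ι := card_lt_univ_of_notMem hi
    omega
  exact hs ▸ card_nsmul_le_sum T a (a i) (hle i hi)

end TopCoordinates

section Truncation

variable {ι : Type*} [Fintype ι] [DecidableEq ι]

lemma four_mul_sum_sq_compl_le_sq_sum {a : ι → ℝ} (ha : ∀ i, 0 ≤ a i) {T : Finset ι} {s : ℝ}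
    (hT : ∀ i ∉ T, s * a i ≤ ∑ j ∈ T, a j) :
    4 * s * ∑ i ∈ Tᶜ, a i ^ 2 ≤ (∑ i, a i) ^ 2 := by
  have htail : s * ∑ i ∈ Tᶜ, a i ^ 2 ≤ (∑ j ∈ T, a j) * ∑ i ∈ Tᶜ, a i := by
    rw [mul_sum, mul_sum]
    refine sum_le_sum fun i hi => ?_
    rw [sq, ← mul_assoc]
    exact mul_le_mul_of_nonneg_right (hT i (mem_compl.mp hi)) (ha i)
  rw [← sum_add_sum_compl T a]
  linarith [four_mul_le_sq_add (∑ j ∈ T, a j) (∑ i ∈ Tᶜ, a i)]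

lemma sum_sq_sub_ite_mem (x : ι → ℝ) (T : Finset ι) :
    ∑ i, (x i - if i ∈ T then x i else 0) ^ 2 = ∑ i ∈ Tᶜ, x i ^ 2 := by
  rw [← sum_add_sum_compl T, sum_eq_zero fun i hi => by simp [hi], zero_add]
  exact sum_congr rfl fun i hi => by simp [mem_compl.mp hi]

lemma card_filter_ite_mem_ne_zero_le (x : ι → ℝ) (T : Finset ι) :
    #{i | (if i ∈ T then x i else 0) ≠ 0} ≤ #T :=
  card_le_card fun i hi => by by_contra h; simp [h] at hi

end Truncation

lemma sqrt_le_div_two_mul_sqrt {E τ s : ℝ} (hs : 0 < s) (hτ : 0 ≤ τ) (h : 4 * s * E ≤ τ ^ 2) :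
    √E ≤ τ / (2 * √s) := by
  refine Real.sqrt_le_iff.mpr ⟨by positivity, ?_⟩
  rw [div_pow, mul_pow, Real.sq_sqrt hs.le, le_div_iff₀ (by positivity)]
  linarith

open Finset in
theorem best_sparse_approximation_general (d : ℕ) (x : Fin d → ℝ) (τ : ℝ)
    (hx : ∑ i, |x i| ≤ τ) (s : ℕ) (hs : 0 < s) :
    ∃ y : Fin d → ℝ, (Finset.univ.filter fun i => y i ≠ 0).card ≤ s ∧
      Real.sqrt (∑ i, (x i - y i) ^ 2) ≤ τ / (2 * Real.sqrt s) := by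
  obtain ⟨T, hcard, hT⟩ := exists_card_le_forall_notMem_nsmul_le (fun i => |x i|) s
  refine ⟨fun i => if i ∈ T then x i else 0,
    (card_filter_ite_mem_ne_zero_le x T).trans hcard, ?_⟩
  have hmass_nonneg : 0 ≤ ∑ i, |x i| := sum_nonneg fun i _ => abs_nonneg (x i)
  have herror := four_mul_sum_sq_compl_le_sq_sum (fun i => abs_nonneg (x i))
    (by simpa only [nsmul_eq_mul] using hT)
  simp only [sq_abs] at herror
  rw [sum_sq_sub_ite_mem]
  exact sqrt_le_div_two_mul_sqrt (by exact_mod_cast hs) (hmass_nonneg.trans hx)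
    (herror.trans (pow_le_pow_left₀ hmass_nonneg hx 2))

open Finset in
theorem best_sparse_approximation (d : ℕ) (x : Fin d → ℝ) (τ : ℝ) (hτ : 0 < τ)
    (hx : ∑ i, |x i| ≤ τ) (s : ℕ) (hs : 0 < s) :
    ∃ y : Fin d → ℝ, (Finset.univ.filter fun i => y i ≠ 0).card ≤ s ∧
      Real.sqrt (∑ i, (x i - y i) ^ 2) ≤ τ / (2 * Real.sqrt s) :=
  best_sparse_approximation_general d x τ hx s hs
end

section
/- The sum of the absolute values of the eigenvalues of a real square matrix M is at most the entrywise l1 norm of M: Σ_i |λ_i(M)| ≤ Σ_{i,j} |M_{ij}|. -/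
open Matrix Polynomial Finset in
private lemma charpoly_unitary_conj {n : Type*} [Fintype n] [DecidableEq n]
    (U A : Matrix n n ℂ) (hU : Uᴴ * U = 1) :
    (Uᴴ * A * U).charpoly = A.charpoly := by
  have h1 : (Uᴴ.map C) * (U.map C) = 1 := by
    rw [← Matrix.map_mul, hU, Matrix.map_one C (map_zero C) (map_one C)]
  have key : charmatrix (Uᴴ * A * U) = Uᴴ.map C * charmatrix A * U.map C := by
    unfold charmatrix
    rw [RingHom.mapMatrix_apply, RingHom.mapMatrix_apply, Matrix.mul_sub, Matrix.sub_mul]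
    congr 1
    · symm
      rw [Matrix.mul_assoc, (Matrix.scalar_commute (X : ℂ[X]) (fun r => Commute.all _ _) (U.map ⇑C)).eq,
        ← Matrix.mul_assoc, h1, Matrix.one_mul]
    · rw [← Matrix.map_mul, ← Matrix.map_mul]
  unfold Matrix.charpoly
  rw [key, det_mul, det_mul, mul_comm, ← mul_assoc, ← det_mul, mul_eq_one_comm.mp h1, det_one, one_mul]

open Matrix Polynomial Finset in
private lemma conj_entry {n : Type*} [Fintype n] (V A : Matrix n n ℂ) (a b : n) :
    (Vᴴ * A * V) a b = ∑ j, ∑ k, (starRingEnd ℂ) (V j a) * (A j k * V k b) := by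
  rw [Matrix.mul_assoc, Matrix.mul_apply]
  simp [Matrix.mul_apply, Matrix.conjTranspose_apply, Finset.mul_sum]

open Matrix Polynomial Finset in
private lemma key_lemma : ∀ (d : ℕ) (A : Matrix (Fin d) (Fin d) ℂ),
    ∃ U : Matrix (Fin d) (Fin d) ℂ, Uᴴ * U = 1 ∧
      ((A.charpoly).roots.map (fun z : ℂ => ‖z‖)).sum ≤ ∑ i, ‖(Uᴴ * A * U) i i‖ := by
  intro d
  induction d with
  | zero =>
    intro A
    refine ⟨1, by simp, ?_⟩
    have : A.charpoly = 1 := Matrix.det_isEmpty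
    simp [this]
  | succ d IH =>
    intro A
    -- eigenvalue
    obtain ⟨μ, hμ⟩ := Module.End.exists_eigenvalue (Matrix.mulVecLin A)
    obtain ⟨v, hv⟩ := hμ.exists_hasEigenvector
    have hv0 : v ≠ 0 := hv.right
    have hvA : ∀ j, ∑ k, A j k * v k = μ * v j := by
      intro j
      have h := hv.apply_eq_smul
      have := congrFun h j
      simpa [Matrix.mulVecLin_apply, Matrix.mulVec, dotProduct] using this
    -- normalized eigenvector in EuclideanSpace
    set E := EuclideanSpace ℂ (Fin (d + 1))
    set v' : E := WithLp.toLp 2 v with hv'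
    have hv'0 : v' ≠ 0 := by rw [hv', ne_eq, WithLp.toLp_eq_zero]; exact hv0
    set c : ℂ := (‖v'‖ : ℂ)⁻¹ with hc
    set w : E := c • v' with hwdef
    have hw : ‖w‖ = 1 := norm_smul_inv_norm hv'0
    have hwapp : ∀ j, w j = c * v j := fun j => rfl
    have hwA : ∀ j, ∑ k, A j k * w k = μ * w j := by
      intro j
      simp only [hwapp]
      calc ∑ k, A j k * (c * v k) = c * ∑ k, A j k * v k := by
            rw [Finset.mul_sum]; exact Finset.sum_congr rfl fun k _ => by ring
        _ = μ * (c * v j) := by rw [hvA j]; ring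
    -- orthonormal basis extension
    have hcard : Module.finrank ℂ E = Fintype.card (Fin (d + 1)) := by
      simp [E, finrank_euclideanSpace_fin]
    have horth : Orthonormal ℂ (Set.restrict {(0 : Fin (d + 1))} (fun _ => w)) := by
      refine ⟨fun i => hw, ?_⟩
      intro i j hij
      exact absurd (Subsingleton.elim i j) hij
    obtain ⟨b, hb⟩ := horth.exists_orthonormalBasis_extension_of_card_eq hcard
    have hb0 : b 0 = w := hb 0 rfl
    have hbij : ∀ i i', ∑ j, (starRingEnd ℂ) (b i j) * b i' j = if i = i' then 1 else 0 := by
      intro i i'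
      have := (orthonormal_iff_ite (𝕜 := ℂ)).mp b.orthonormal i i'
      rw [← this, PiLp.inner_apply]
      simp [RCLike.inner_apply, mul_comm]
    set U₀ : Matrix (Fin (d + 1)) (Fin (d + 1)) ℂ := Matrix.of fun j i => b i j with hU₀def
    have hU₀ : U₀ᴴ * U₀ = 1 := by
      ext i i'
      rw [Matrix.mul_apply]
      simp only [Matrix.conjTranspose_apply, hU₀def, Matrix.of_apply, Complex.star_def]
      rw [hbij i i']
      simp [Matrix.one_apply]
    set A₁ : Matrix (Fin (d + 1)) (Fin (d + 1)) ℂ := U₀ᴴ * A * U₀ with hA₁def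
    have hchar : A₁.charpoly = A.charpoly := charpoly_unitary_conj U₀ A hU₀
    have hAU : ∀ j, (A * U₀) j 0 = μ * w j := by
      intro j
      rw [Matrix.mul_apply]
      simpa [hU₀def, hb0] using hwA j
    have hcol : ∀ i, A₁ i 0 = if i = 0 then μ else 0 := by
      intro i
      have : A₁ i 0 = ∑ j, (starRingEnd ℂ) (b i j) * (μ * w j) := by
        rw [hA₁def, Matrix.mul_assoc, Matrix.mul_apply]
        exact Finset.sum_congr rfl fun j _ => by
          rw [hAU j]; simp [Matrix.conjTranspose_apply, hU₀def, Complex.star_def]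
      rw [this]
      have : ∑ j, (starRingEnd ℂ) (b i j) * (μ * w j) = μ * ∑ j, (starRingEnd ℂ) (b i j) * b 0 j := by
        rw [Finset.mul_sum]
        exact Finset.sum_congr rfl fun j _ => by rw [hb0]; ring
      rw [this, hbij i 0]
      by_cases h : i = 0 <;> simp [h]
    set B : Matrix (Fin d) (Fin d) ℂ := A₁.submatrix Fin.succ Fin.succ with hBdef
    -- charpoly factorization
    have hfac : A₁.charpoly = (X - C μ) * B.charpoly := by
      unfold Matrix.charpoly
      rw [Matrix.det_succ_column_zero]
      have hsub : (charmatrix A₁).submatrix (Fin.succAbove 0) Fin.succ = charmatrix B := by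
        ext i j
        by_cases h : i = j
        · subst h
          simp [Matrix.submatrix_apply, Fin.succAbove_zero, charmatrix_apply_eq, hBdef]
        · rw [Matrix.submatrix_apply, Fin.succAbove_zero,
            charmatrix_apply_ne _ _ _ (fun hh => h (Fin.succ_injective _ hh)),
            charmatrix_apply_ne _ _ _ h]
          simp [hBdef]
      rw [Finset.sum_eq_single 0]
      · rw [hsub, charmatrix_apply_eq, hcol 0]
        simp
      · intro i _ hi
        rw [charmatrix_apply_ne _ _ _ hi, hcol i, if_neg hi]
        simp
      · intro h; exact absurd (Finset.mem_univ 0) h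
    have hne : (X - C μ) * B.charpoly ≠ 0 := ((monic_X_sub_C μ).mul B.charpoly_monic).ne_zero
    have hroots : (A.charpoly.roots.map (fun z : ℂ => ‖z‖)).sum
        = ‖μ‖ + (B.charpoly.roots.map (fun z : ℂ => ‖z‖)).sum := by
      rw [← hchar, hfac, Polynomial.roots_mul hne, Polynomial.roots_X_sub_C]
      simp
    -- IH
    obtain ⟨W, hW, hle⟩ := IH B
    -- pad W
    set V : Matrix (Fin (d + 1)) (Fin (d + 1)) ℂ :=
      Matrix.of (Fin.cons (Fin.cons 1 0) fun i => Fin.cons 0 (W i)) with hVdef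
    have hV00 : V 0 0 = 1 := rfl
    have hV0s : ∀ j : Fin d, V 0 j.succ = 0 := fun j => by
      simp [hVdef, Fin.cons_zero, Fin.cons_succ]
    have hVs0 : ∀ i : Fin d, V i.succ 0 = 0 := fun i => by
      simp [hVdef, Fin.cons_zero, Fin.cons_succ]
    have hVss : ∀ i j : Fin d, V i.succ j.succ = W i j := fun i j => by
      simp [hVdef, Fin.cons_succ]
    have hVV : Vᴴ * V = 1 := by
      ext a b
      rw [Matrix.mul_apply]
      simp only [Matrix.conjTranspose_apply, Complex.star_def]
      rw [Fin.sum_univ_succ]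
      induction a using Fin.cases with
      | zero =>
        induction b using Fin.cases with
        | zero => simp [hV00, hVs0, Matrix.one_apply]
        | succ b => simp [hV00, hV0s, hVs0, Matrix.one_apply, (Fin.succ_ne_zero b).symm]
      | succ a =>
        induction b using Fin.cases with
        | zero => simp [hV00, hV0s, hVs0, Matrix.one_apply, Fin.succ_ne_zero a]
        | succ b =>
          have := congrFun (congrFun hW a) b
          rw [Matrix.mul_apply] at this
          simp only [Matrix.conjTranspose_apply, Complex.star_def] at this
          simp only [hV0s, hVss, hV00, _root_.map_one, one_mul, mul_zero, zero_mul, _root_.map_zero, zero_add]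
          rw [this]
          simp [Matrix.one_apply, Fin.succ_inj]
    refine ⟨U₀ * V, ?_, ?_⟩
    · rw [Matrix.conjTranspose_mul, Matrix.mul_assoc, ← Matrix.mul_assoc U₀ᴴ, hU₀, Matrix.one_mul, hVV]
    · have hUAU : (U₀ * V)ᴴ * A * (U₀ * V) = Vᴴ * A₁ * V := by
        rw [Matrix.conjTranspose_mul, hA₁def]
        noncomm_ring
      rw [hUAU, hroots, Fin.sum_univ_succ]
      have h00 : (Vᴴ * A₁ * V) 0 0 = μ := by
        rw [conj_entry, Fin.sum_univ_succ]
        simp only [hV00, hVs0, _root_.map_one, _root_.map_zero, one_mul, zero_mul, mul_zero]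
        rw [Fin.sum_univ_succ]
        simp [hV00, hV0s, hVs0, hcol 0]
      have hss : ∀ i : Fin d, (Vᴴ * A₁ * V) i.succ i.succ = (Wᴴ * B * W) i i := by
        intro i
        rw [conj_entry, conj_entry]
        rw [Fin.sum_univ_succ]
        simp only [hVs0, hV0s, _root_.map_zero, zero_mul, Finset.sum_const_zero, zero_add, hVss]
        refine Finset.sum_congr rfl fun j _ => ?_
        rw [Fin.sum_univ_succ]
        simp [hVs0, hV0s, hVss, hBdef]
      have hsum : ∑ i : Fin d, ‖(Vᴴ * A₁ * V) i.succ i.succ‖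
          = ∑ i : Fin d, ‖(Wᴴ * B * W) i i‖ :=
        Finset.sum_congr rfl fun i _ => by rw [hss i]
      rw [h00, hsum]
      exact add_le_add (le_refl _) hle

open Finset in
/-- The sum of absolute values of the (complex) eigenvalues of a real square matrix `M`
(the roots of its characteristic polynomial over `ℂ`, counted with multiplicity) is at most
the entrywise ℓ₁ norm of `M`. -/
theorem sum_abs_eigenvalues_le_entrywise_l1 (d : ℕ) (M : Matrix (Fin d) (Fin d) ℝ) :
    ((Matrix.charpoly (M.map (Complex.ofReal))).roots.map (fun z : ℂ => ‖z‖)).sum ≤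
      ∑ i, ∑ j, |M i j| := by
  set A : Matrix (Fin d) (Fin d) ℂ := M.map Complex.ofReal with hAdef
  obtain ⟨U, hU, hle⟩ := key_lemma d A
  have hUU : U * (Matrix.conjTranspose U) = 1 := mul_eq_one_comm.mp hU
  have hrow : ∀ j : Fin d, ∑ i, ‖U j i‖ ^ 2 = 1 := by
    intro j
    have h := congrFun (congrFun hUU j) j
    simp only [Matrix.mul_apply, Matrix.one_apply_eq] at h
    have h2 : ∑ i, ((‖U j i‖ : ℂ)) ^ 2 = 1 := by
      rw [← h]
      refine Finset.sum_congr rfl fun i _ => ?_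
      rw [Matrix.conjTranspose_apply, Complex.star_def, Complex.mul_conj]
      rw [← Complex.sq_norm]
      push_cast
      ring
    have h3 : ((∑ i, ‖U j i‖ ^ 2 : ℝ) : ℂ) = ((1 : ℝ) : ℂ) := by
      push_cast
      simpa using h2
    exact_mod_cast h3
  have hCS : ∀ j k : Fin d, ∑ i, ‖U j i‖ * ‖U k i‖ ≤ 1 := by
    intro j k
    have h := Finset.sum_mul_sq_le_sq_mul_sq Finset.univ
      (fun i => ‖U j i‖) (fun i => ‖U k i‖)
    rw [hrow j, hrow k, one_mul] at h
    have hnn : 0 ≤ ∑ i, ‖U j i‖ * ‖U k i‖ :=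
      Finset.sum_nonneg fun i _ => mul_nonneg (norm_nonneg _) (norm_nonneg _)
    nlinarith
  refine hle.trans ?_
  calc ∑ i, ‖((Matrix.conjTranspose U) * A * U) i i‖
      ≤ ∑ i, ∑ j, ∑ k, ‖U j i‖ * (‖A j k‖ * ‖U k i‖) := by
        refine Finset.sum_le_sum fun i _ => ?_
        rw [conj_entry]
        refine (norm_sum_le _ _).trans ?_
        refine Finset.sum_le_sum fun j _ => ?_
        refine (norm_sum_le _ _).trans ?_
        refine Finset.sum_le_sum fun k _ => le_of_eq ?_
        rw [norm_mul, norm_mul, Complex.norm_conj]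
    _ = ∑ j, ∑ k, ‖A j k‖ * ∑ i, ‖U j i‖ * ‖U k i‖ := by
        rw [Finset.sum_comm]
        refine Finset.sum_congr rfl fun j _ => ?_
        rw [Finset.sum_comm]
        refine Finset.sum_congr rfl fun k _ => ?_
        rw [Finset.mul_sum]
        exact Finset.sum_congr rfl fun i _ => by ring
    _ ≤ ∑ j, ∑ k, ‖A j k‖ * 1 := by
        refine Finset.sum_le_sum fun j _ => Finset.sum_le_sum fun k _ => ?_
        exact mul_le_mul_of_nonneg_left (hCS j k) (norm_nonneg _)
    _ = ∑ i, ∑ j, |M i j| := by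
        refine Finset.sum_congr rfl fun j _ => Finset.sum_congr rfl fun k _ => ?_
        rw [mul_one, hAdef, Matrix.map_apply, Complex.norm_real, Real.norm_eq_abs]
end

section
/- If Y follows the non-central chi-squared distribution with d degrees of freedom and noncentrality λ, then for any t > 0, Pr(Y > d + λ + t) ≤ exp(−d·t^2 / (4(d+2λ)(d+2λ+t))). -/
open MeasureTheory ProbabilityTheory Finset

/-- The non-central chi-squared distribution `χ'²_d(λ)`: the law of `‖g + v‖²` where
`g ~ N(0, I_d)` and `v` is any fixed vector with `‖v‖² = λ`. -/
noncomputable def noncentralChiSq (d : ℕ) (v : Fin d → ℝ) : Measure ℝ :=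
  Measure.map (fun x : Fin d → ℝ => ∑ j, (x j + v j) ^ 2)
    (Measure.pi fun _ => gaussianReal 0 1)

open Real

private lemma log_le_half_sub_inv' {y : ℝ} (hy : 1 ≤ y) : Real.log y ≤ (y - y⁻¹) / 2 := by
  have key : ∀ x : ℝ, 0 < x → HasDerivAt (fun z : ℝ => (z - z⁻¹) / 2 - Real.log z)
      ((1 + (x ^ 2)⁻¹) / 2 - x⁻¹) x := by
    intro x hx
    have h1 : HasDerivAt (fun z : ℝ => (z - z⁻¹) / 2) ((1 + (x ^ 2)⁻¹) / 2) x := by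
      have := ((hasDerivAt_id x).sub (hasDerivAt_inv hx.ne')).div_const 2
      simpa [sub_neg_eq_add] using this
    exact h1.sub (Real.hasDerivAt_log hx.ne')
  have hmono : MonotoneOn (fun z : ℝ => (z - z⁻¹) / 2 - Real.log z) (Set.Ici 1) := by
    refine monotoneOn_of_deriv_nonneg (convex_Ici 1) ?_ ?_ ?_
    · intro x hx
      exact ((key x (lt_of_lt_of_le zero_lt_one hx)).differentiableAt).continuousAt.continuousWithinAt
    · intro x hx
      rw [interior_Ici] at hx
      exact ((key x (lt_trans zero_lt_one hx)).differentiableAt).differentiableWithinAt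
    · intro x hx
      rw [interior_Ici] at hx
      have hx0 : (0:ℝ) < x := lt_trans zero_lt_one hx
      rw [(key x hx0).deriv]
      have : (1 + (x ^ 2)⁻¹) / 2 - x⁻¹ = (x - 1) ^ 2 / (2 * x ^ 2) := by
        field_simp
        ring
      rw [this]
      positivity
  have h0 : (fun z : ℝ => (z - z⁻¹) / 2 - Real.log z) 1 = 0 := by norm_num
  have := hmono (Set.mem_Ici.mpr le_rfl) (Set.mem_Ici.mpr hy) hy
  rw [h0] at this
  linarith [this]

private lemma gauss_pointwise' (s a : ℝ) (hs : s < 1/2) (x : ℝ) :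
    gaussianPDFReal 0 1 x * Real.exp (s * (x + a) ^ 2)
      = (Real.sqrt (2 * π))⁻¹ * (Real.exp (s * a ^ 2 / (1 - 2 * s)) *
        Real.exp (-((1 - 2 * s) / 2) * (x - s * a / ((1 - 2 * s) / 2)) ^ 2)) := by
  have h2s : (1:ℝ) - 2 * s ≠ 0 := by nlinarith
  simp only [gaussianPDFReal, NNReal.coe_one, mul_one, sub_zero]
  rw [mul_assoc, ← Real.exp_add, ← Real.exp_add]
  congr 2
  field_simp
  ring

private lemma gauss_integrable_vol' (s a : ℝ) (hs : s < 1/2) :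
    Integrable (fun x : ℝ =>
      Real.exp (-((1 - 2 * s) / 2) * (x - s * a / ((1 - 2 * s) / 2)) ^ 2)) := by
  have hb : (0:ℝ) < (1 - 2 * s) / 2 := by nlinarith
  exact (integrable_exp_neg_mul_sq hb).comp_sub_right _

private lemma gauss_exp_sq_integrable' (s a : ℝ) (hs : s < 1/2) :
    Integrable (fun x => Real.exp (s * (x + a) ^ 2)) (gaussianReal 0 1) := by
  rw [gaussianReal_of_var_ne_zero 0 one_ne_zero,
    integrable_withDensity_iff (measurable_gaussianPDF 0 1)
      (ae_of_all _ fun x => ENNReal.ofReal_lt_top)]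
  have : (fun x : ℝ => Real.exp (s * (x + a) ^ 2) * (gaussianPDF 0 1 x).toReal)
      = fun x => (Real.sqrt (2 * π))⁻¹ * (Real.exp (s * a ^ 2 / (1 - 2 * s)) *
        Real.exp (-((1 - 2 * s) / 2) * (x - s * a / ((1 - 2 * s) / 2)) ^ 2)) := by
    ext x
    rw [gaussianPDF, ENNReal.toReal_ofReal (gaussianPDFReal_nonneg 0 1 x), mul_comm]
    exact gauss_pointwise' s a hs x
  rw [this]
  exact (((gauss_integrable_vol' s a hs).const_mul _).const_mul _)

private lemma gauss_exp_sq_integral' (s a : ℝ) (hs : s < 1/2) :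
    ∫ x, Real.exp (s * (x + a) ^ 2) ∂(gaussianReal 0 1)
      = Real.exp (s * a ^ 2 / (1 - 2 * s)) / Real.sqrt (1 - 2 * s) := by
  have h1 : (0:ℝ) < 1 - 2 * s := by nlinarith
  have hb : (0:ℝ) < (1 - 2 * s) / 2 := by linarith
  rw [gaussianReal_of_var_ne_zero 0 one_ne_zero]
  have hdens : gaussianPDF 0 1
      = fun x => (ENNReal.ofNNReal ((gaussianPDFReal 0 1 x).toNNReal)) := rfl
  rw [hdens, integral_withDensity_eq_integral_smul
    ((measurable_gaussianPDFReal 0 1).real_toNNReal)]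
  have : (fun x : ℝ => (gaussianPDFReal 0 1 x).toNNReal • Real.exp (s * (x + a) ^ 2))
      = fun x => (Real.sqrt (2 * π))⁻¹ * (Real.exp (s * a ^ 2 / (1 - 2 * s)) *
        Real.exp (-((1 - 2 * s) / 2) * (x - s * a / ((1 - 2 * s) / 2)) ^ 2)) := by
    ext x
    rw [NNReal.smul_def, smul_eq_mul, Real.coe_toNNReal _ (gaussianPDFReal_nonneg 0 1 x)]
    exact gauss_pointwise' s a hs x
  rw [this, integral_const_mul, integral_const_mul,
    integral_sub_right_eq_self (fun x => Real.exp (-((1 - 2 * s) / 2) * x ^ 2)) _,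
    integral_gaussian]
  have harr : (Real.sqrt (2 * π))⁻¹ * Real.sqrt (π / ((1 - 2 * s) / 2))
      = (Real.sqrt (1 - 2 * s))⁻¹ := by
    rw [← Real.sqrt_inv, ← Real.sqrt_mul (by positivity), ← Real.sqrt_inv]
    congr 1
    field_simp
  calc (Real.sqrt (2 * π))⁻¹ * (Real.exp (s * a ^ 2 / (1 - 2 * s)) * Real.sqrt (π / ((1 - 2 * s) / 2)))
      = Real.exp (s * a ^ 2 / (1 - 2 * s)) * ((Real.sqrt (2 * π))⁻¹ * Real.sqrt (π / ((1 - 2 * s) / 2))) := by ring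
    _ = Real.exp (s * a ^ 2 / (1 - 2 * s)) / Real.sqrt (1 - 2 * s) := by
        rw [harr, ← div_eq_mul_inv]

private lemma pi_gauss_integral_prod' {d : ℕ} (f : Fin d → ℝ → ℝ) :
    ∫ x : Fin d → ℝ, ∏ i, f i (x i) ∂(Measure.pi fun _ => gaussianReal 0 1)
      = ∏ i, ∫ x, f i x ∂(gaussianReal 0 1) := by
  letI : MeasureSpace ℝ := ⟨gaussianReal 0 1⟩
  haveI : SigmaFinite (volume : Measure ℝ) := inferInstanceAs (SigmaFinite (gaussianReal 0 1))
  exact MeasureTheory.integral_fintype_prod_eq_prod f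

private lemma pi_gauss_integrable_prod' {d : ℕ} (f : Fin d → ℝ → ℝ)
    (hf : ∀ i, Integrable (f i) (gaussianReal 0 1)) :
    Integrable (fun x : Fin d → ℝ => ∏ i, f i (x i))
      (Measure.pi fun _ => gaussianReal 0 1) := by
  letI : MeasureSpace ℝ := ⟨gaussianReal 0 1⟩
  haveI : SigmaFinite (volume : Measure ℝ) := inferInstanceAs (SigmaFinite (gaussianReal 0 1))
  exact MeasureTheory.Integrable.fintype_prod hf

set_option maxHeartbeats 1000000 in
/-- Upper tail bound for the non-central chi-squared distribution: if `Y ~ χ'²_d(λ)` then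
`Pr(Y > d + λ + t) ≤ exp(−d t² / (4(d+2λ)(d+2λ+t)))` for every `t > 0`. -/
theorem noncentralChiSq_upper_tail
    {Ω : Type*} [MeasureSpace Ω] [IsProbabilityMeasure (ℙ : Measure Ω)]
    (d : ℕ) (hd : 1 ≤ d) (lam : ℝ) (hlam : 0 ≤ lam)
    (v : Fin d → ℝ) (hv : ∑ j, (v j) ^ 2 = lam)
    (Y : Ω → ℝ) (hY : Measure.map Y ℙ = noncentralChiSq d v)
    (t : ℝ) (ht : 0 < t) :
    (ℙ {ω | d + lam + t < Y ω}).toReal ≤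
      Real.exp (-(d * t ^ 2) / (4 * (d + 2 * lam) * (d + 2 * lam + t))) := by
  have hπmeas : Measurable (fun x : Fin d → ℝ => ∑ j, (x j + v j) ^ 2) :=
    Finset.measurable_sum _ fun j _ => by fun_prop
  haveI hP : IsProbabilityMeasure (noncentralChiSq d v) := by
    constructor
    rw [noncentralChiSq, Measure.map_apply hπmeas MeasurableSet.univ]
    simp
  have hYae : AEMeasurable Y ℙ := by
    by_contra h
    have h0 : Measure.map Y ℙ = 0 := Measure.map_of_not_aemeasurable h
    rw [hY] at h0
    have h1 := hP.measure_univ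
    rw [h0] at h1
    simp at h1
  have hD1 : (1:ℝ) ≤ (d : ℝ) := by exact_mod_cast hd
  set w : ℝ := (d : ℝ) + lam with hwdef
  have hw0 : 0 < w := by rw [hwdef]; linarith
  have hwt : 0 < w + t := by linarith
  set s : ℝ := t / (2 * (w + t)) with hsdef
  have hs0 : 0 < s := by rw [hsdef]; positivity
  have h2s : 1 - 2 * s = w / (w + t) := by
    rw [hsdef]; field_simp; ring
  have h12s : (0:ℝ) < 1 - 2 * s := by rw [h2s]; positivity
  have hshalf : s < 1/2 := by linarith
  -- integrability
  have hprodf : (fun x : Fin d → ℝ => Real.exp (s * ∑ j, (x j + v j) ^ 2))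
      = fun x => ∏ j, Real.exp (s * (x j + v j) ^ 2) := by
    funext x
    rw [Finset.mul_sum, Real.exp_sum]
  have hIntP : Integrable (fun x : Fin d → ℝ => Real.exp (s * ∑ j, (x j + v j) ^ 2))
      (Measure.pi fun _ => gaussianReal 0 1) := by
    rw [hprodf]
    exact pi_gauss_integrable_prod' _ fun j => gauss_exp_sq_integrable' s (v j) hshalf
  have hexp_meas : Measurable (fun y : ℝ => Real.exp (s * y)) := (measurable_id.const_mul s).exp
  have hIntMap : Integrable (fun y => Real.exp (s * y)) (Measure.map Y ℙ) := by
    rw [hY, noncentralChiSq,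
      integrable_map_measure hexp_meas.aestronglyMeasurable hπmeas.aemeasurable]
    exact hIntP
  have hIntY : Integrable (fun ω => Real.exp (s * Y ω)) ℙ := by
    have := (integrable_map_measure hexp_meas.aestronglyMeasurable hYae).mp hIntMap
    exact this
  -- mgf value
  have hmgf : mgf Y ℙ s
      = Real.exp (s * lam / (1 - 2 * s)) / (Real.sqrt (1 - 2 * s)) ^ d := by
    have h1 : mgf Y ℙ s = ∫ y, Real.exp (s * y) ∂(Measure.map Y ℙ) :=
      (integral_map hYae hexp_meas.aestronglyMeasurable).symm
    rw [h1, hY, noncentralChiSq,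
      integral_map hπmeas.aemeasurable hexp_meas.aestronglyMeasurable]
    have h2 : (fun x : Fin d → ℝ => Real.exp (s * ∑ j, (x j + v j) ^ 2))
        = fun x => ∏ j, Real.exp (s * (x j + v j) ^ 2) := hprodf
    calc ∫ x : Fin d → ℝ, Real.exp (s * ∑ j, (x j + v j) ^ 2)
            ∂(Measure.pi fun _ => gaussianReal 0 1)
        = ∫ x : Fin d → ℝ, ∏ j, Real.exp (s * (x j + v j) ^ 2)
            ∂(Measure.pi fun _ => gaussianReal 0 1) := by rw [h2]
      _ = ∏ j, ∫ x, Real.exp (s * (x + v j) ^ 2) ∂(gaussianReal 0 1) :=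
          pi_gauss_integral_prod' (fun j y => Real.exp (s * (y + v j) ^ 2))
      _ = ∏ j : Fin d, Real.exp (s * (v j) ^ 2 / (1 - 2 * s)) / Real.sqrt (1 - 2 * s) := by
          refine Finset.prod_congr rfl fun j _ => ?_
          exact gauss_exp_sq_integral' s (v j) hshalf
      _ = Real.exp (s * lam / (1 - 2 * s)) / (Real.sqrt (1 - 2 * s)) ^ d := by
          rw [Finset.prod_div_distrib, Finset.prod_const, Finset.card_univ, Fintype.card_fin,
            ← Real.exp_sum]
          congr 2
          rw [← Finset.sum_div, ← Finset.mul_sum, hv]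
  -- Chernoff
  have chern := measure_ge_le_exp_mul_mgf (μ := ℙ) (X := Y) (w + t) hs0.le hIntY
  have hmono : (ℙ {ω | w + t < Y ω}).toReal ≤ (ℙ {ω | w + t ≤ Y ω}).toReal :=
    ENNReal.toReal_mono (measure_ne_top _ _) (measure_mono (Set.setOf_subset_setOf.mpr fun ω => le_of_lt))
  have hgoal_set : {ω | (d:ℝ) + lam + t < Y ω} = {ω | w + t < Y ω} := rfl
  refine le_trans (le_trans hmono chern) ?_
  rw [hmgf]
  -- rewrite as a single exponential
  have hsqrt_pos : 0 < Real.sqrt (1 - 2 * s) := Real.sqrt_pos.mpr h12s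
  have hpow : (Real.sqrt (1 - 2 * s)) ^ d = Real.exp ((d:ℝ) * (Real.log (1 - 2 * s) / 2)) := by
    rw [← Real.log_sqrt h12s.le, Real.exp_nat_mul, Real.exp_log hsqrt_pos]
  rw [hpow, ← Real.exp_sub, ← Real.exp_add]
  apply Real.exp_le_exp.mpr
  -- exponent inequality
  have hlog1 : Real.log (1 - 2 * s) = - Real.log ((w + t) / w) := by
    rw [h2s, ← Real.log_inv]
    congr 1
    rw [inv_div]
  have hy1 : 1 ≤ (w + t) / w := (one_le_div hw0).mpr (by linarith)
  have hkey := log_le_half_sub_inv' hy1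
  have hinv : ((w + t) / w)⁻¹ = w / (w + t) := inv_div _ _
  rw [hinv] at hkey
  have e1 : s * (w + t) = t / 2 := by
    rw [hsdef]; field_simp
  have e2 : s * lam / (1 - 2 * s) = lam * t / (2 * w) := by
    rw [h2s, hsdef]; field_simp
  have e3 : -((d:ℝ) * (Real.log (1 - 2 * s) / 2))
      ≤ (d:ℝ) * (((w + t) / w - w / (w + t)) / 2) / 2 := by
    rw [hlog1]
    have hd0 : (0:ℝ) ≤ (d:ℝ) := by linarith
    nlinarith [mul_le_mul_of_nonneg_left hkey hd0]
  have efin : -(t / 2) + lam * t / (2 * w) + (d:ℝ) * (((w + t) / w - w / (w + t)) / 2) / 2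
      = -((d:ℝ) * t ^ 2) / (4 * w * (w + t)) := by
    have hlw : lam = w - (d:ℝ) := by rw [hwdef]; ring
    rw [hlw]
    field_simp
    ring
  have elast : ((d:ℝ) * t ^ 2) / (4 * ((d:ℝ) + 2 * lam) * ((d:ℝ) + 2 * lam + t))
      ≤ ((d:ℝ) * t ^ 2) / (4 * w * (w + t)) := by
    apply div_le_div_of_nonneg_left (by positivity) (by positivity)
    have hwle : w ≤ (d:ℝ) + 2 * lam := by rw [hwdef]; linarith
    exact mul_le_mul (by linarith) (by linarith) (by linarith) (by linarith)
  have hrw : -((d:ℝ) * t ^ 2) / (4 * ((d:ℝ) + 2 * lam) * ((d:ℝ) + 2 * lam + t))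
      = -(((d:ℝ) * t ^ 2) / (4 * ((d:ℝ) + 2 * lam) * ((d:ℝ) + 2 * lam + t))) := by
    rw [neg_div]
  rw [hrw]
  have hrw2 : -((d:ℝ) * t ^ 2) / (4 * w * (w + t))
      = -(((d:ℝ) * t ^ 2) / (4 * w * (w + t))) := by rw [neg_div]
  calc -s * (w + t) + (s * lam / (1 - 2 * s) - (d:ℝ) * (Real.log (1 - 2 * s) / 2))
      ≤ -(t / 2) + lam * t / (2 * w) + (d:ℝ) * (((w + t) / w - w / (w + t)) / 2) / 2 := by
        have : -s * (w + t) = -(t / 2) := by rw [neg_mul, e1]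
        rw [this, e2]
        linarith [e3]
    _ = -((d:ℝ) * t ^ 2) / (4 * w * (w + t)) := efin
    _ ≤ -(((d:ℝ) * t ^ 2) / (4 * ((d:ℝ) + 2 * lam) * ((d:ℝ) + 2 * lam + t))) := by
        rw [hrw2]
        exact neg_le_neg elast
end
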